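/- arXiv:1912.07168 — 2 statements merged into one kernel-verified Lean document; each statement's English description precedes it below -/
import Mathlib

section
/- Suppose the sequences are generated by Algorithm II. Then there exists a constant C > 0 (depending only on p, σ, θ and E_0) such that for every integer k ≥ 1: Φ(x_k) − Φ(x*) ≤ C·k^{−(3p+1)/2}, inf_{1 ≤ i ≤ k} ‖w_i‖² ≤ C·k^{−3p}, and inf_{1 ≤ i ≤ k} ε_i ≤ C·k^{−(3p+3)/2}. -/
open Finset Real
open scoped RealInnerProductSpace

/-!
Write `A k = 1 / γ k`. The ε-subgradient inequality at `x (k+1)`, tested at `x k` and at `x*`,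
together with the error criterion makes `E` decrease by at least
`(1 - σ²)/2 · D k`, `D k = A (k+1) ‖x (k+1) - ṽ k‖² / λ (k+1)`, so `∑ D k ≤ 2 E 0 / (1 - σ²)`.
The stepsize rule reads `A (k+1) - A k = √(λ (k+1) A (k+1))`, whence `√(A k) ≥ 1 + B k / 2` for
`B k = ∑_{i ≤ k} √(λ i)`. By Hölder's inequality, the large-step condition
`λ ‖x - ṽ‖^(p-1) ≥ θ` turns `∑ D k < ∞` into `∑_{i ≤ k} B i ^ (2s) ≲ B k ^ (1-s)` with
`s = (p-1)/(3p+1)`, and this recursion forces `B k ≳ k^((3p+1)/4)`, i.e. `A k ≳ k^((3p+1)/2)`.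
Now `Φ (x k) - Φ x* ≤ E 0 / A k`. Moreover `D` dominates `λ A ‖w‖² / 4` and `2 A ε`, so the
averages of `‖w i‖²` with weights `λ i A i` (of total `≥ (A k - 1)² / k` by Cauchy–Schwarz)
and of `ε i` with weights `A i` are small, and so are the minima.
-/

section Descent

variable {H : Type*} [NormedAddCommGroup H] [InnerProductSpace ℝ H]

theorem lyapunov_descent {Φ : H → ℝ} {x x' v v' vt w xs : H} {α γ γ' lam ε σ : ℝ}
    (hγ : 0 < γ) (hα : α ∈ Set.Ioo (0 : ℝ) 1) (hlam : 0 < lam) (hγ' : γ' = (1 - α) * γ)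
    (hαsq : α ^ 2 = lam * γ') (hvt : vt = (1 - α) • x + α • v)
    (hw : ∀ y, Φ x' + ⟪y - x', w⟫ - ε ≤ Φ y)
    (herr : ‖lam • w + (x' - vt)‖ ^ 2 + 2 * lam * ε ≤ σ ^ 2 * ‖x' - vt‖ ^ 2)
    (hv' : v' = v - (α / γ') • w) :
    1 / γ' * (Φ x' - Φ xs) + 1 / 2 * ‖v' - xs‖ ^ 2
        + (1 - σ ^ 2) / 2 * (1 / γ' * ‖x' - vt‖ ^ 2 / lam)
      ≤ 1 / γ * (Φ x - Φ xs) + 1 / 2 * ‖v - xs‖ ^ 2 := by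
  obtain ⟨hα₀, hα₁⟩ := hα
  have hγ'pos : 0 < γ' := by rw [hγ']; nlinarith
  -- the subgradient inequality at `x` and at `xs`, combined with weights `1 - α` and `α`
  have hcomb : Φ x' - Φ xs ≤ (1 - α) * (Φ x - Φ xs) + ⟪x' - vt, w⟫ + α * ⟪v - xs, w⟫ + ε := by
    have h₁ := hw x
    have h₂ := hw xs
    rw [hvt]
    simp only [inner_sub_left, inner_add_left, real_inner_smul_left] at h₁ h₂ ⊢
    nlinarith
  have hv'norm : ‖v' - xs‖ ^ 2
      = ‖v - xs‖ ^ 2 - 2 * (α / γ') * ⟪v - xs, w⟫ + (α / γ') ^ 2 * ‖w‖ ^ 2 := by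
    rw [hv', sub_right_comm, norm_sub_sq_real, real_inner_smul_right, norm_smul, mul_pow,
      Real.norm_eq_abs, sq_abs]
    ring
  have herr' : lam / 2 * ‖w‖ ^ 2 + ⟪x' - vt, w⟫ + ε + (1 - σ ^ 2) / 2 * (‖x' - vt‖ ^ 2 / lam)
      ≤ 0 := by
    rw [norm_add_sq_real, norm_smul, mul_pow, Real.norm_eq_abs, sq_abs, real_inner_smul_left,
      real_inner_comm] at herr
    have : (1 - σ ^ 2) / 2 * (‖x' - vt‖ ^ 2 / lam) * lam = (1 - σ ^ 2) / 2 * ‖x' - vt‖ ^ 2 := by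
      field_simp
    nlinarith
  have hratio : (α / γ') ^ 2 = lam / γ' := by rw [div_pow, hαsq]; field_simp
  rw [hv'norm, hratio, show 1 / γ = (1 - α) / γ' by rw [hγ']; field_simp]
  have key : Φ x' - Φ xs - α * ⟪v - xs, w⟫ - (1 - α) * (Φ x - Φ xs) + lam / 2 * ‖w‖ ^ 2
      + (1 - σ ^ 2) / 2 * (‖x' - vt‖ ^ 2 / lam) ≤ 0 := by linarith
  linear_combination (1 / γ') * key

theorem sq_norm_le_of_error_le {w r : H} {lam ε σ : ℝ} (hlam : 0 < lam) (hε : 0 ≤ ε)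
    (hσ : σ ^ 2 ≤ 1) (h : ‖lam • w + r‖ ^ 2 + 2 * lam * ε ≤ σ ^ 2 * ‖r‖ ^ 2) :
    ‖w‖ ^ 2 ≤ 4 * (‖r‖ / lam) ^ 2 := by
  have h₁ : ‖lam • w + r‖ ≤ ‖r‖ :=
    (pow_le_pow_iff_left₀ (norm_nonneg _) (norm_nonneg _) two_ne_zero).1
      (by nlinarith [mul_nonneg hlam.le hε, sq_nonneg ‖r‖])
  have h₂ : lam * ‖w‖ ≤ 2 * ‖r‖ :=
    calc lam * ‖w‖ = ‖(lam • w + r) - r‖ := by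
          rw [add_sub_cancel_right, norm_smul, Real.norm_of_nonneg hlam.le]
      _ ≤ ‖lam • w + r‖ + ‖r‖ := norm_sub_le _ _
      _ ≤ 2 * ‖r‖ := by linarith
  rw [div_pow, ← mul_div_assoc, le_div_iff₀ (by positivity)]
  nlinarith [pow_le_pow_left₀ (by positivity) h₂ 2]

theorem two_mul_mul_le_sq_of_error_le {w r : H} {lam ε σ : ℝ} (hσ : σ ^ 2 ≤ 1)
    (h : ‖lam • w + r‖ ^ 2 + 2 * lam * ε ≤ σ ^ 2 * ‖r‖ ^ 2) : 2 * lam * ε ≤ ‖r‖ ^ 2 := by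
  nlinarith [sq_nonneg ‖lam • w + r‖, sq_nonneg ‖r‖]

end Descent

theorem sum_range_le_div_of_add_mul_le {f g : ℕ → ℝ} {a : ℝ} (ha : 0 < a) (hf : ∀ k, 0 ≤ f k)
    (h : ∀ k, f (k + 1) + a * g k ≤ f k) (k : ℕ) : ∑ i ∈ range k, g i ≤ f 0 / a := by
  have htel : ∀ k, a * ∑ i ∈ range k, g i + f k ≤ f 0 := by
    intro k
    induction k with
    | zero => simp
    | succ k ih => rw [sum_range_succ, mul_add]; linarith [h k]
  rw [le_div_iff₀ ha, mul_comm]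
  linarith [htel k, hf k]

theorem one_div_sub_one_div_eq_sqrt {α γ γ' lam : ℝ} (hγ : 0 < γ) (hα : α ∈ Set.Ioo (0 : ℝ) 1)
    (hγ' : γ' = (1 - α) * γ) (hαsq : α ^ 2 = lam * γ') :
    1 / γ' - 1 / γ = √(lam * (1 / γ')) := by
  obtain ⟨hα₀, hα₁⟩ := hα
  have hγ'pos : 0 < γ' := by rw [hγ']; nlinarith
  have h : 1 / γ' - 1 / γ = α / γ' := by rw [hγ']; field_simp; ring
  rw [h, eq_comm, sqrt_eq_iff_mul_self_eq_of_pos (by positivity), ← sq, div_pow, hαsq]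
  field_simp

theorem Real.sum_rpow_mul_rpow_le {ι : Type*} (s : Finset ι) {X Y : ι → ℝ}
    (hX : ∀ i ∈ s, 0 ≤ X i) (hY : ∀ i ∈ s, 0 ≤ Y i) {a : ℝ} (ha₀ : 0 ≤ a) (ha₁ : a ≤ 1) :
    ∑ i ∈ s, X i ^ a * Y i ^ (1 - a) ≤ (∑ i ∈ s, X i) ^ a * (∑ i ∈ s, Y i) ^ (1 - a) := by
  rcases ha₀.eq_or_lt with rfl | ha₀
  · simp
  rcases ha₁.eq_or_lt with rfl | ha₁
  · simp
  have h := inner_le_Lp_mul_Lq_of_nonneg s (HolderConjugate.inv_one_sub_inv ha₀ ha₁)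
    (fun i hi => rpow_nonneg (hX i hi) a) (fun i hi => rpow_nonneg (hY i hi) (1 - a))
  have hpow : ∀ b : ℝ, b ≠ 0 → ∀ {Z : ι → ℝ}, (∀ i ∈ s, 0 ≤ Z i) →
      ∑ i ∈ s, (Z i ^ b) ^ b⁻¹ = ∑ i ∈ s, Z i := fun b hb Z hZ =>
    sum_congr rfl fun i hi => rpow_rpow_inv (hZ i hi) hb
  rwa [hpow a ha₀.ne' hX, hpow (1 - a) (sub_pos.2 ha₁).ne' hY, one_div, one_div,
    inv_inv, inv_inv] at h

theorem rpow_add_one_div_le_sum_range {t : ℝ} (ht : 0 ≤ t) (n : ℕ) :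
    (n : ℝ) ^ (t + 1) / (t + 1) ≤ ∑ i ∈ range n, ((i : ℝ) + 1) ^ t := by
  have h := MonotoneOn.integral_le_sum (x₀ := 0) (a := n) (f := fun x : ℝ => x ^ t)
    ((monotoneOn_rpow_Ici_of_exponent_nonneg ht).mono (by simp [Set.Icc_subset_Ici_self]))
  rw [integral_rpow (Or.inl (by linarith)), zero_rpow (by linarith), sub_zero] at h
  simpa using h

theorem rpow_mul_div_le_sum_rpow_of_mul_rpow_le {b : ℕ → ℝ} {c q u : ℝ} (hc : 0 ≤ c)
    (hq : 0 ≤ q) (hu : 0 ≤ u) {n : ℕ} (hb : ∀ i < n, c * ((i + 1 : ℕ) : ℝ) ^ q ≤ b (i + 1)) :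
    c ^ u * ((n : ℝ) ^ (q * u + 1) / (q * u + 1)) ≤ ∑ i ∈ range n, b (i + 1) ^ u :=
  calc c ^ u * ((n : ℝ) ^ (q * u + 1) / (q * u + 1))
      ≤ c ^ u * ∑ i ∈ range n, ((i : ℝ) + 1) ^ (q * u) := by
        gcongr
        exact rpow_add_one_div_le_sum_range (by positivity) n
    _ = ∑ i ∈ range n, (c * ((i + 1 : ℕ) : ℝ) ^ q) ^ u := by
        rw [mul_sum]
        refine sum_congr rfl fun i _ => ?_
        rw [mul_rpow hc (by positivity), ← rpow_mul (by positivity)]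
        push_cast
        rfl
    _ ≤ ∑ i ∈ range n, b (i + 1) ^ u :=
        sum_le_sum fun i hi => rpow_le_rpow (by positivity) (hb i (mem_range.1 hi)) hu

-- Strong induction: with `q = (v - u)⁻¹`, the bound at the indices below `k` gives
-- `∑_{i<k} b (i+1) ^ u ≳ c ^ u k ^ (q v)`, and `hcM` is what makes `h` return `c k ^ q ≤ b k`.
theorem mul_rpow_le_of_sum_rpow_le {u v M c : ℝ} {b : ℕ → ℝ} (hu : 0 ≤ u) (huv : u < v)
    (hb : ∀ k, 0 ≤ b k) (hM : 0 < M) (h : ∀ k, ∑ i ∈ range k, b (i + 1) ^ u ≤ M * b k ^ v)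
    (hc : 0 < c) (hc₁ : c ≤ b 1) (hcM : M * c ^ (v - u) * (v / (v - u) * 2 ^ (v / (v - u))) ≤ 1)
    (k : ℕ) : c * (k : ℝ) ^ (v - u)⁻¹ ≤ b k := by
  set q := (v - u)⁻¹
  have hq : 0 < q := inv_pos.2 (by linarith)
  have hqv : q * v = q * u + 1 := by
    have : v - u ≠ 0 := by linarith
    simp only [q]; field_simp; ring
  have hvq : v / (v - u) = q * v := by simp only [q]; ring
  have hv : 0 < v := by linarith
  have hqvpos : 0 < q * v := mul_pos hq hv
  rw [hvq] at hcM
  induction k using Nat.strong_induction_on with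
  | _ k ih =>
  rcases k with _ | _ | m
  · simp [zero_rpow hq.ne', hb 0]
  · simpa using hc₁
  have hsum : c ^ u * (((m + 1 : ℕ) : ℝ) ^ (q * v) / (q * v)) ≤ M * b (m + 2) ^ v :=
    calc _ ≤ ∑ i ∈ range (m + 1), b (i + 1) ^ u := by
          rw [hqv]
          exact rpow_mul_div_le_sum_rpow_of_mul_rpow_le hc.le hq.le hu
            fun i hi => ih (i + 1) (by omega)
      _ ≤ ∑ i ∈ range (m + 2), b (i + 1) ^ u :=
          sum_le_sum_of_subset_of_nonneg (range_subset_range.2 (by omega))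
            fun i _ _ => rpow_nonneg (hb _) _
      _ ≤ M * b (m + 2) ^ v := h _
  have hk : ((m + 2 : ℕ) : ℝ) ^ (q * v) ≤ 2 ^ (q * v) * ((m + 1 : ℕ) : ℝ) ^ (q * v) := by
    rw [← mul_rpow (by norm_num) (by positivity)]
    exact rpow_le_rpow (by positivity) (by push_cast; linarith) hqvpos.le
  have : M * (c * ((m + 2 : ℕ) : ℝ) ^ q) ^ v ≤ M * b (m + 2) ^ v :=
    calc _ = M * c ^ (v - u) * c ^ u * ((m + 2 : ℕ) : ℝ) ^ (q * v) := by
          rw [mul_rpow hc.le (by positivity), ← rpow_mul (by positivity), mul_assoc M,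
            ← rpow_add hc, sub_add_cancel, mul_assoc]
      _ ≤ M * c ^ (v - u) * c ^ u * (2 ^ (q * v) * ((m + 1 : ℕ) : ℝ) ^ (q * v)) := by gcongr
      _ = M * c ^ (v - u) * (q * v * 2 ^ (q * v))
            * (c ^ u * (((m + 1 : ℕ) : ℝ) ^ (q * v) / (q * v))) := by
          field_simp [hv.ne']
      _ ≤ 1 * (c ^ u * (((m + 1 : ℕ) : ℝ) ^ (q * v) / (q * v))) :=
          mul_le_mul_of_nonneg_right hcM
            (mul_nonneg (rpow_nonneg hc.le _) (div_nonneg (by positivity) hqvpos.le))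
      _ ≤ M * b (m + 2) ^ v := by rw [one_mul]; exact hsum
  exact (rpow_le_rpow_iff (by positivity) (hb _) (by linarith)).1 (le_of_mul_le_mul_left this hM)

theorem exists_mul_rpow_le_of_sum_rpow_le {u v M : ℝ} {b : ℕ → ℝ} (hu : 0 ≤ u) (huv : u < v)
    (hb : ∀ k, 0 ≤ b k) (hb₁ : 0 < b 1)
    (h : ∀ k, ∑ i ∈ range k, b (i + 1) ^ u ≤ M * b k ^ v) :
    ∃ c > 0, ∀ k : ℕ, c * (k : ℝ) ^ (v - u)⁻¹ ≤ b k := by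
  have hM : 0 < M := by
    have h₁ := h 1
    rw [sum_range_one] at h₁
    exact pos_of_mul_pos_left ((rpow_pos_of_pos hb₁ _).trans_le h₁) (rpow_nonneg hb₁.le _)
  set K := M * (v / (v - u) * 2 ^ (v / (v - u)))
  have hK : 0 < K := mul_pos hM (mul_pos (div_pos (by linarith) (by linarith)) (by positivity))
  refine ⟨min (b 1) (K⁻¹ ^ (v - u)⁻¹), lt_min hb₁ (by positivity),
    mul_rpow_le_of_sum_rpow_le hu huv hb hM h (lt_min hb₁ (by positivity)) (min_le_left _ _) ?_⟩
  calc M * min (b 1) (K⁻¹ ^ (v - u)⁻¹) ^ (v - u) * (v / (v - u) * 2 ^ (v / (v - u)))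
      = K * min (b 1) (K⁻¹ ^ (v - u)⁻¹) ^ (v - u) := by ring
    _ ≤ K * (K⁻¹ ^ (v - u)⁻¹) ^ (v - u) :=
        mul_le_mul_of_nonneg_left (rpow_le_rpow (le_min hb₁.le (by positivity))
          (min_le_right _ _) (by linarith)) hK.le
    _ = 1 := by
        rw [← rpow_mul (by positivity), inv_mul_cancel₀ (by linarith), rpow_one,
          mul_inv_cancel₀ hK.ne']

theorem rpow_mul_rpow_le_of_le_sq_mul_pow {n : ℕ} {θ a R B s e : ℝ} (hθ : 0 ≤ θ) (ha : 0 < a)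
    (hR : 0 ≤ R) (hB : 0 ≤ B) (he : 0 ≤ e) (hs : 2 * s = n * e) (hse : 1 - 3 * s = 2 * e)
    (h : θ ≤ a ^ 2 * R ^ n) :
    θ ^ e * B ^ (2 * s) ≤ ((B * R / a) ^ 2) ^ s * a ^ (1 - s) := by
  have hpow : (a ^ 2 * R ^ n) ^ e = R ^ (2 * s) * a ^ (1 - 3 * s) := by
    rw [mul_rpow (by positivity) (by positivity), ← rpow_natCast, ← rpow_natCast,
      ← rpow_mul ha.le, ← rpow_mul hR, hs, hse, mul_comm]
    norm_num
  calc θ ^ e * B ^ (2 * s) ≤ (a ^ 2 * R ^ n) ^ e * B ^ (2 * s) := by gcongr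
    _ = ((B * R / a) ^ 2) ^ s * a ^ (1 - s) := by
      rw [hpow, ← rpow_natCast, ← rpow_mul (by positivity), Nat.cast_ofNat,
        div_rpow (by positivity) ha.le, mul_rpow hB hR,
        show 1 - s = (1 - 3 * s) + 2 * s by ring, rpow_add ha]
      field_simp

-- Hölder's inequality with `X i = (B (i+1) R i / a (i+1))²` and `Y i = a (i+1)`, where
-- `B k = ∑_{j < k} a (j+1)`; the large-step condition makes `X ^ s * Y ^ (1-s) ≥ θ ^ e * B ^ (2s)`.
theorem sum_rpow_le_of_le_sq_mul_pow {n : ℕ} {θ K s e : ℝ} {a R : ℕ → ℝ} (hθ : 0 < θ)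
    (ha : ∀ k, 0 < a (k + 1)) (hR : ∀ k, 0 ≤ R k) (he : 0 ≤ e) (hs : 2 * s = n * e)
    (hse : 1 - 3 * s = 2 * e) (h : ∀ k, θ ≤ a (k + 1) ^ 2 * R k ^ n)
    (hK : ∀ k, ∑ i ∈ range k, ((∑ j ∈ range (i + 1), a (j + 1)) * R i / a (i + 1)) ^ 2 ≤ K)
    (k : ℕ) :
    ∑ i ∈ range k, (∑ j ∈ range (i + 1), a (j + 1)) ^ (2 * s)
      ≤ K ^ s / θ ^ e * (∑ i ∈ range k, a (i + 1)) ^ (1 - s) := by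
  have hs₀ : 0 ≤ s := by nlinarith [mul_nonneg (Nat.cast_nonneg (α := ℝ) n) he]
  rw [div_mul_eq_mul_div, le_div_iff₀ (by positivity), mul_comm, mul_sum]
  calc ∑ i ∈ range k, θ ^ e * (∑ j ∈ range (i + 1), a (j + 1)) ^ (2 * s)
      ≤ ∑ i ∈ range k,
          (((∑ j ∈ range (i + 1), a (j + 1)) * R i / a (i + 1)) ^ 2) ^ s * a (i + 1) ^ (1 - s) :=
        sum_le_sum fun i _ => rpow_mul_rpow_le_of_le_sq_mul_pow hθ.le (ha i) (hR i)
          (sum_nonneg fun j _ => (ha j).le) he hs hse (h i)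
    _ ≤ (∑ i ∈ range k, ((∑ j ∈ range (i + 1), a (j + 1)) * R i / a (i + 1)) ^ 2) ^ s
          * (∑ i ∈ range k, a (i + 1)) ^ (1 - s) :=
        sum_rpow_mul_rpow_le _ (fun i _ => sq_nonneg _) (fun i _ => (ha i).le) hs₀
          (by linarith)
    _ ≤ K ^ s * (∑ i ∈ range k, a (i + 1)) ^ (1 - s) :=
        mul_le_mul_of_nonneg_right (rpow_le_rpow (sum_nonneg fun i _ => sq_nonneg _) (hK k) hs₀)
          (rpow_nonneg (sum_nonneg fun i _ => (ha i).le) _)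

theorem sqrt_add_half_sqrt_le {a a' l : ℝ} (ha : 0 < a) (hl : 0 ≤ l) (h : a' - a = √(l * a')) :
    √a + √l / 2 ≤ √a' := by
  have ha' : a ≤ a' := by linarith [sqrt_nonneg (l * a')]
  have hb : 0 < √a := sqrt_pos.2 ha
  have hub : √a ≤ √a' := sqrt_le_sqrt ha'
  have hrec : √a' ^ 2 - √a ^ 2 = √l * √a' := by
    rw [sq_sqrt ha.le, sq_sqrt (ha.le.trans ha'), ← sqrt_mul hl, h]
  nlinarith [sqrt_nonneg l]

section Growth

variable {A lam R : ℕ → ℝ}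

theorem one_le_of_sub_eq_sqrt (hA₀ : A 0 = 1)
    (hA : ∀ k, A (k + 1) - A k = √(lam (k + 1) * A (k + 1))) (k : ℕ) : 1 ≤ A k := by
  induction k with
  | zero => rw [hA₀]
  | succ k ih => linarith [hA k, sqrt_nonneg (lam (k + 1) * A (k + 1))]

theorem sq_sum_sqrt_div_four_le_sub_one (hA₀ : A 0 = 1)
    (hA : ∀ k, A (k + 1) - A k = √(lam (k + 1) * A (k + 1))) (hlam : ∀ k, 0 ≤ lam (k + 1))
    (k : ℕ) : (∑ i ∈ range k, √(lam (i + 1))) ^ 2 / 4 ≤ A k - 1 := by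
  have hsqrt : 1 + (∑ i ∈ range k, √(lam (i + 1))) / 2 ≤ √(A k) := by
    induction k with
    | zero => simp [hA₀]
    | succ k ih =>
      have := sqrt_add_half_sqrt_le (one_pos.trans_le (one_le_of_sub_eq_sqrt hA₀ hA k))
        (hlam k) (hA k)
      rw [sum_range_succ]
      linarith
  have hB : 0 ≤ ∑ i ∈ range k, √(lam (i + 1)) := sum_nonneg fun i _ => sqrt_nonneg _
  have := pow_le_pow_left₀ (by positivity) hsqrt 2
  rw [sq_sqrt (zero_le_one.trans (one_le_of_sub_eq_sqrt hA₀ hA k))] at this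
  nlinarith

theorem exists_mul_rpow_le_sub_one {p : ℕ} (hp : 1 ≤ p) {θ S : ℝ} (hθ : 0 < θ)
    (hA₀ : A 0 = 1) (hA : ∀ k, A (k + 1) - A k = √(lam (k + 1) * A (k + 1)))
    (hlam : ∀ k, 0 < lam (k + 1)) (hR : ∀ k, 0 ≤ R k)
    (hls : ∀ k, θ ≤ lam (k + 1) * R k ^ (p - 1))
    (hD : ∀ k, ∑ i ∈ range k, A (i + 1) * R i ^ 2 / lam (i + 1) ≤ S) :
    ∃ c > 0, ∀ k : ℕ, c * (k : ℝ) ^ ((3 * (p : ℝ) + 1) / 2) ≤ A k - 1 := by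
  set B : ℕ → ℝ := fun k => ∑ i ∈ range k, √(lam (i + 1))
  have hB : ∀ k, 0 ≤ B k := fun k => sum_nonneg fun i _ => sqrt_nonneg _
  have hBA : ∀ k, B k ^ 2 / 4 ≤ A k - 1 :=
    sq_sum_sqrt_div_four_le_sub_one hA₀ hA fun k => (hlam k).le
  have hK : ∀ k, ∑ i ∈ range k, (B (i + 1) * R i / √(lam (i + 1))) ^ 2 ≤ 4 * S := fun k =>
    calc ∑ i ∈ range k, (B (i + 1) * R i / √(lam (i + 1))) ^ 2
        ≤ ∑ i ∈ range k, 4 * (A (i + 1) * R i ^ 2 / lam (i + 1)) := by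
          refine sum_le_sum fun i _ => ?_
          rw [div_pow, mul_pow, sq_sqrt (hlam i).le, ← mul_div_assoc, ← mul_assoc]
          exact div_le_div_of_nonneg_right
            (mul_le_mul_of_nonneg_right (by linarith [hBA (i + 1)]) (sq_nonneg _)) (hlam i).le
      _ ≤ 4 * S := by rw [← mul_sum]; linarith [hD k]
  set s : ℝ := (p - 1) / (3 * p + 1)
  set e : ℝ := 2 / (3 * p + 1)
  have hse : 1 - 3 * s = 2 * e := by simp only [s, e]; field_simp; ring
  have hsn : 2 * s = ((p - 1 : ℕ) : ℝ) * e := by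
    rw [Nat.cast_sub hp]; simp only [s, e]; push_cast; field_simp
  have hrec : ∀ k, ∑ i ∈ range k, B (i + 1) ^ (2 * s) ≤ (4 * S) ^ s / θ ^ e * B k ^ (1 - s) :=
    sum_rpow_le_of_le_sq_mul_pow (a := fun k => √(lam k)) hθ (fun k => sqrt_pos.2 (hlam k)) hR
      (by positivity) hsn hse (fun k => by rw [sq_sqrt (hlam k).le]; exact hls k) hK
  obtain ⟨c, hc, hcB⟩ := exists_mul_rpow_le_of_sum_rpow_le (by rw [hsn]; positivity)
    (by linarith [(by positivity : 0 < e)]) hB (by simpa [B] using hlam 0) hrec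
  have hq : (1 - s - 2 * s)⁻¹ = (3 * p + 1) / 4 := by
    rw [show 1 - s - 2 * s = 2 * e by linarith]
    simp only [e]; field_simp; norm_num
  refine ⟨c ^ 2 / 4, by positivity, fun k => ?_⟩
  calc c ^ 2 / 4 * (k : ℝ) ^ ((3 * (p : ℝ) + 1) / 2)
      = (c * (k : ℝ) ^ (1 - s - 2 * s)⁻¹) ^ 2 / 4 := by
        rw [hq, mul_pow, ← rpow_natCast ((k : ℝ) ^ ((3 * (p : ℝ) + 1) / 4)) 2,
          ← rpow_mul (by positivity)]
        ring_nf
    _ ≤ B k ^ 2 / 4 := by gcongr; exact hcB k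
    _ ≤ A k - 1 := hBA k

end Growth

theorem Finset.exists_le_div_sum_of_sum_mul_le {ι : Type*} {s : Finset ι} (hs : s.Nonempty)
    {u f : ι → ℝ} {S : ℝ} (hu : ∀ i ∈ s, 0 < u i) (h : ∑ i ∈ s, u i * f i ≤ S) :
    ∃ i ∈ s, f i ≤ S / ∑ i ∈ s, u i := by
  by_contra! hlt
  have hpos : 0 < ∑ i ∈ s, u i := sum_pos hu hs
  have : ∑ i ∈ s, u i * (S / ∑ j ∈ s, u j) < ∑ i ∈ s, u i * f i :=
    sum_lt_sum_of_nonempty hs fun i hi => mul_lt_mul_of_pos_left (hlt i hi) (hu i hi)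
  rw [← sum_mul, mul_div_cancel₀ _ hpos.ne'] at this
  linarith

section Rates

variable {A lam R : ℕ → ℝ} {c r S : ℝ}

theorem exists_sq_div_le_mul_rpow (hA₀ : A 0 = 1)
    (hA : ∀ k, A (k + 1) - A k = √(lam (k + 1) * A (k + 1))) (hlam : ∀ k, 0 < lam (k + 1))
    (hc : 0 < c) (hgrowth : ∀ k : ℕ, c * (k : ℝ) ^ r ≤ A k - 1)
    (hD : ∀ k, ∑ i ∈ range k, A (i + 1) * R i ^ 2 / lam (i + 1) ≤ S) {k : ℕ} (hk : 0 < k) :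
    ∃ i < k, (R i / lam (i + 1)) ^ 2 ≤ S / c ^ 2 * (k : ℝ) ^ (1 - 2 * r) := by
  have hA₁ : ∀ k, 1 ≤ A k := one_le_of_sub_eq_sqrt hA₀ hA
  have hS : 0 ≤ S := by simpa using hD 0
  have hkpos : (0 : ℝ) < k := by exact_mod_cast hk
  set W := ∑ i ∈ range k, lam (i + 1) * A (i + 1)
  -- Cauchy–Schwarz on the telescoping sum `A k - A 0 = ∑ (A (i + 1) - A i)`
  have hCS : (A k - 1) ^ 2 ≤ k * W := by
    have h := sq_sum_le_card_mul_sum_sq (s := range k) (f := fun i => A (i + 1) - A i)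
    rw [sum_range_sub, hA₀, card_range] at h
    refine h.trans_eq (congrArg _ (sum_congr rfl fun i _ => ?_))
    rw [hA, sq_sqrt (mul_nonneg (hlam i).le (zero_le_one.trans (hA₁ _)))]
  have hW : c ^ 2 * (k : ℝ) ^ (2 * r - 1) ≤ W := by
    have h := pow_le_pow_left₀ (by positivity) (hgrowth k) 2
    rw [mul_pow, ← rpow_natCast ((k : ℝ) ^ r), ← rpow_mul hkpos.le, Nat.cast_ofNat] at h
    rw [rpow_sub hkpos, rpow_one, ← mul_div_assoc, div_le_iff₀ hkpos, mul_comm 2 r]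
    linarith
  have hDW : ∑ i ∈ range k, lam (i + 1) * A (i + 1) * (R i / lam (i + 1)) ^ 2 ≤ S :=
    (hD k).trans_eq' (sum_congr rfl fun i _ => by have := hlam i; field_simp)
  obtain ⟨i, hi, hle⟩ := exists_le_div_sum_of_sum_mul_le (nonempty_range_iff.2 hk.ne')
    (fun i _ => mul_pos (hlam i) (one_pos.trans_le (hA₁ _))) hDW
  refine ⟨i, mem_range.1 hi, hle.trans ?_⟩
  calc S / W ≤ S / (c ^ 2 * (k : ℝ) ^ (2 * r - 1)) :=
        div_le_div_of_nonneg_left hS (by positivity) hW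
    _ = S / c ^ 2 * (k : ℝ) ^ (1 - 2 * r) := by
        rw [show 1 - 2 * r = -(2 * r - 1) by ring, rpow_neg hkpos.le]
        field_simp

theorem exists_le_mul_rpow_neg {ε : ℕ → ℝ} (hlam : ∀ k, 0 < lam (k + 1)) (hc : 0 < c)
    (hr : 0 ≤ r) (hgrowth : ∀ k : ℕ, c * (k : ℝ) ^ r ≤ A k - 1)
    (hD : ∀ k, ∑ i ∈ range k, A (i + 1) * R i ^ 2 / lam (i + 1) ≤ S)
    (hε : ∀ k, 2 * lam (k + 1) * ε (k + 1) ≤ R k ^ 2) {k : ℕ} (hk : 0 < k) :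
    ∃ i < k, ε (i + 1) ≤ (r + 1) * S / (2 * c) * (k : ℝ) ^ (-(r + 1)) := by
  have hS : 0 ≤ S := by simpa using hD 0
  have hkpos : (0 : ℝ) < k := by exact_mod_cast hk
  have hA : ∀ i, c * ((i + 1 : ℕ) : ℝ) ^ r ≤ A (i + 1) := fun i =>
    (hgrowth (i + 1)).trans (sub_le_self _ zero_le_one)
  have hApos : ∀ i, 0 < A (i + 1) := fun i => (by positivity : 0 < c * _).trans_le (hA i)
  have hsum : c * ((k : ℝ) ^ (r + 1) / (r + 1)) ≤ ∑ i ∈ range k, A (i + 1) := by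
    simpa using rpow_mul_div_le_sum_rpow_of_mul_rpow_le (u := 1) hc.le hr zero_le_one
      fun i _ => hA i
  have hAε : ∑ i ∈ range k, A (i + 1) * ε (i + 1) ≤ S / 2 := by
    calc ∑ i ∈ range k, A (i + 1) * ε (i + 1)
        ≤ ∑ i ∈ range k, A (i + 1) * R i ^ 2 / lam (i + 1) / 2 := by
          refine sum_le_sum fun i _ => ?_
          have := mul_le_mul_of_nonneg_left (hε i) (hApos i).le
          rw [div_div, le_div_iff₀ (by linarith [hlam i])]
          linarith
      _ ≤ S / 2 := by rw [← sum_div]; linarith [hD k]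
  obtain ⟨i, hi, hle⟩ := exists_le_div_sum_of_sum_mul_le (nonempty_range_iff.2 hk.ne')
    (fun i _ => hApos i) hAε
  refine ⟨i, mem_range.1 hi, hle.trans ?_⟩
  calc S / 2 / ∑ i ∈ range k, A (i + 1) ≤ S / 2 / (c * ((k : ℝ) ^ (r + 1) / (r + 1))) :=
        div_le_div_of_nonneg_left (by positivity) (by positivity) hsum
    _ = (r + 1) * S / (2 * c) * (k : ℝ) ^ (-(r + 1)) := by
        rw [rpow_neg hkpos.le]
        field_simp

end Rates

theorem le_div_mul_rpow_neg_of_mul_le {a f E c r k : ℝ} (hE : 0 ≤ E) (hc : 0 < c) (hk : 0 < k)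
    (ha : c * k ^ r ≤ a) (h : a * f ≤ E) : f ≤ E / c * k ^ (-r) := by
  have ha' : 0 < a := (by positivity : 0 < c * k ^ r).trans_le ha
  calc f ≤ E / a := (le_div_iff₀' ha').2 h
    _ ≤ E / (c * k ^ r) := div_le_div_of_nonneg_left hE (by positivity) ha
    _ = E / c * k ^ (-r) := by rw [rpow_neg hk.le]; field_simp

theorem sInf_image_le_of_lt {f : ℕ → ℝ} (hf : ∀ i, 0 ≤ f (i + 1)) {i k : ℕ} (hi : i < k) :
    sInf (f '' {j | 1 ≤ j ∧ j ≤ k}) ≤ f (i + 1) := by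
  refine csInf_le ⟨0, ?_⟩ ⟨i + 1, ⟨by omega, by omega⟩, rfl⟩
  rintro _ ⟨j, ⟨hj, -⟩, rfl⟩
  obtain ⟨j, rfl⟩ := Nat.exists_eq_add_of_le' hj
  exact hf j

theorem stmt_17_general (d p : ℕ) (hp : 1 ≤ p)
    (Φ : EuclideanSpace ℝ (Fin d) → ℝ)
    (σ θ : ℝ) (hσ : σ ∈ Set.Ioo (0:ℝ) 1) (hθ : 0 < θ)
    (xstar : EuclideanSpace ℝ (Fin d)) (hstar : ∀ y, Φ xstar ≤ Φ y)
    (x v w vt : ℕ → EuclideanSpace ℝ (Fin d)) (γ eps lam α E : ℕ → ℝ)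
    (hγ0 : γ 0 = 1) (hγpos : ∀ k : ℕ, 0 < γ k)
    (hlampos : ∀ k : ℕ, 0 < lam (k+1)) (hepsnn : ∀ k : ℕ, 0 ≤ eps (k+1))
    (hα : ∀ k : ℕ, α (k+1) ∈ Set.Ioo (0:ℝ) 1)
    (hαeq : ∀ k : ℕ, (α (k+1)) ^ 2 = lam (k+1) * ((1 - α (k+1)) * γ k))
    (hγ : ∀ k : ℕ, γ (k+1) = (1 - α (k+1)) * γ k)
    (hvt : ∀ k : ℕ, vt k = (1 - α (k+1)) • x k + α (k+1) • v k)
    (hw : ∀ k : ℕ, ∀ y : EuclideanSpace ℝ (Fin d),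
      Φ (x (k+1)) + ⟪y - x (k+1), w (k+1)⟫ - eps (k+1) ≤ Φ y)
    (herr : ∀ k : ℕ,
      ‖lam (k+1) • w (k+1) + x (k+1) - vt k‖ ^ 2 + 2 * lam (k+1) * eps (k+1) ≤
        σ ^ 2 * ‖x (k+1) - vt k‖ ^ 2)
    (hls : ∀ k : ℕ, θ ≤ lam (k+1) * ‖x (k+1) - vt k‖ ^ (p - 1))
    (hv : ∀ k : ℕ, v (k+1) = v k - (α (k+1) / γ (k+1)) • w (k+1))
    (hE : ∀ k : ℕ, E k = (1 / γ k) * (Φ (x k) - Φ xstar) + (1/2) * ‖v k - xstar‖ ^ 2) :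
    ∃ C > (0:ℝ), ∀ k : ℕ, 1 ≤ k →
      Φ (x k) - Φ xstar ≤ C * (k:ℝ) ^ (-((3 * (p:ℝ) + 1) / 2)) ∧
      sInf ((fun i => ‖w i‖ ^ 2) '' {i : ℕ | 1 ≤ i ∧ i ≤ k}) ≤
        C * (k:ℝ) ^ (-(3 * (p:ℝ))) ∧
      sInf (eps '' {i : ℕ | 1 ≤ i ∧ i ≤ k}) ≤ C * (k:ℝ) ^ (-((3 * (p:ℝ) + 3) / 2)) := by
  have hσ₁ : σ ^ 2 < 1 := pow_lt_one₀ hσ.1.le hσ.2 two_ne_zero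
  set A : ℕ → ℝ := fun k => 1 / γ k
  set D : ℕ → ℝ := fun k => A (k + 1) * ‖x (k + 1) - vt k‖ ^ 2 / lam (k + 1)
  have herr' : ∀ k, ‖lam (k + 1) • w (k + 1) + (x (k + 1) - vt k)‖ ^ 2
      + 2 * lam (k + 1) * eps (k + 1) ≤ σ ^ 2 * ‖x (k + 1) - vt k‖ ^ 2 := fun k => by
    simpa only [add_sub_assoc] using herr k
  have hαsq : ∀ k, α (k + 1) ^ 2 = lam (k + 1) * γ (k + 1) := fun k => by rw [hαeq, hγ]
  have hdesc : ∀ k, E (k + 1) + (1 - σ ^ 2) / 2 * D k ≤ E k := fun k => by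
    rw [hE, hE]
    exact lyapunov_descent (hγpos k) (hα k) (hlampos k) (hγ k) (hαsq k) (hvt k) (hw k)
      (herr' k) (hv k)
  have hEnn : ∀ k, 0 ≤ E k := fun k => by
    rw [hE]
    exact add_nonneg (mul_nonneg (one_div_pos.2 (hγpos k)).le (sub_nonneg.2 (hstar _)))
      (by positivity)
  set S := E 0 / ((1 - σ ^ 2) / 2)
  have hD : ∀ k, ∑ i ∈ range k, D i ≤ S := sum_range_le_div_of_add_mul_le (by linarith) hEnn hdesc
  have hEk : ∀ k, E k ≤ E 0 := fun k => antitone_nat_of_succ_le (fun j => by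
    have : 0 ≤ D j :=
      div_nonneg (mul_nonneg (one_div_pos.2 (hγpos _)).le (sq_nonneg _)) (hlampos j).le
    nlinarith [hdesc j]) (Nat.zero_le k)
  have hA : ∀ k, A (k + 1) - A k = √(lam (k + 1) * A (k + 1)) := fun k =>
    one_div_sub_one_div_eq_sqrt (hγpos k) (hα k) (hγ k) (hαsq k)
  obtain ⟨c, hc, hgrowth⟩ := exists_mul_rpow_le_sub_one hp hθ (by simp [A, hγ0]) hA hlampos
    (fun k => norm_nonneg _) hls hD
  set r : ℝ := (3 * p + 1) / 2
  set C := max 1 (max (E 0 / c) (max (4 * (S / c ^ 2)) ((r + 1) * S / (2 * c))))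
  refine ⟨C, by positivity, fun k hk => ?_⟩
  have hC : ∀ {C' e a : ℝ}, C' ≤ C → a ≤ C' * (k : ℝ) ^ e → a ≤ C * (k : ℝ) ^ e :=
    fun hC' ha => ha.trans (by gcongr)
  obtain ⟨i, hi, hRi⟩ := exists_sq_div_le_mul_rpow (by simp [A, hγ0]) hA hlampos hc hgrowth hD hk
  obtain ⟨j, hj, hεj⟩ := exists_le_mul_rpow_neg hlampos hc (by positivity) hgrowth hD
    (fun k => two_mul_mul_le_sq_of_error_le hσ₁.le (herr' k)) hk
  rw [show -(3 * (p : ℝ)) = 1 - 2 * r by simp only [r]; ring,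
    show -((3 * (p : ℝ) + 3) / 2) = -(r + 1) by simp only [r]; ring]
  refine ⟨hC (le_max_of_le_right (le_max_left _ _)) ?_,
    hC (le_max_of_le_right (le_max_of_le_right (le_max_left _ _))) ?_,
    hC (le_max_of_le_right (le_max_of_le_right (le_max_right _ _)))
      ((sInf_image_le_of_lt hepsnn hj).trans hεj)⟩
  · refine le_div_mul_rpow_neg_of_mul_le (hEnn 0) hc (by exact_mod_cast hk)
      ((hgrowth k).trans (sub_le_self _ zero_le_one)) ?_
    show 1 / γ k * _ ≤ _
    linarith [hE k, hEk k, (by positivity : (0 : ℝ) ≤ 1 / 2 * ‖v k - xstar‖ ^ 2)]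
  · calc sInf _ ≤ ‖w (i + 1)‖ ^ 2 := sInf_image_le_of_lt (fun j => sq_nonneg _) hi
      _ ≤ 4 * (‖x (i + 1) - vt i‖ / lam (i + 1)) ^ 2 :=
          sq_norm_le_of_error_le (hlampos i) (hepsnn i) hσ₁.le (herr' i)
      _ ≤ 4 * (S / c ^ 2) * (k : ℝ) ^ (1 - 2 * r) := by rw [mul_assoc]; gcongr

/-- for sequences generated by Algorithm II, there is `C > 0` (depending
only on `p, σ, θ, E_0`) such that for all `k ≥ 1`:
`Φ(x_k) − Φ(x*) ≤ C k^{−(3p+1)/2}`, `inf_{1≤i≤k} ‖w_i‖² ≤ C k^{−3p}`, and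
`inf_{1≤i≤k} ε_i ≤ C k^{−(3p+3)/2}`. -/
theorem stmt_17 (d p : ℕ) (hd : 1 ≤ d) (hp : 1 ≤ p)
    (Φ : EuclideanSpace ℝ (Fin d) → ℝ)
    (hconv : ConvexOn ℝ Set.univ Φ) (hsmooth : ContDiff ℝ 2 Φ)
    (σ θ : ℝ) (hσ : σ ∈ Set.Ioo (0:ℝ) 1) (hθ : 0 < θ)
    (xstar : EuclideanSpace ℝ (Fin d)) (hstar : ∀ y, Φ xstar ≤ Φ y)
    (x v w vt : ℕ → EuclideanSpace ℝ (Fin d)) (γ eps lam α E : ℕ → ℝ)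
    (hproj : ∀ z : EuclideanSpace ℝ (Fin d), (∀ y, Φ z ≤ Φ y) → ‖v 0 - xstar‖ ≤ ‖v 0 - z‖)
    (hγ0 : γ 0 = 1) (hγpos : ∀ k : ℕ, 0 < γ k)
    (hlampos : ∀ k : ℕ, 0 < lam (k+1)) (hepsnn : ∀ k : ℕ, 0 ≤ eps (k+1))
    (hα : ∀ k : ℕ, α (k+1) ∈ Set.Ioo (0:ℝ) 1)
    (hαeq : ∀ k : ℕ, (α (k+1)) ^ 2 = lam (k+1) * ((1 - α (k+1)) * γ k))
    (hγ : ∀ k : ℕ, γ (k+1) = (1 - α (k+1)) * γ k)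
    (hvt : ∀ k : ℕ, vt k = (1 - α (k+1)) • x k + α (k+1) • v k)
    (hw : ∀ k : ℕ, ∀ y : EuclideanSpace ℝ (Fin d),
      Φ (x (k+1)) + ⟪y - x (k+1), w (k+1)⟫ - eps (k+1) ≤ Φ y)
    (herr : ∀ k : ℕ,
      ‖lam (k+1) • w (k+1) + x (k+1) - vt k‖ ^ 2 + 2 * lam (k+1) * eps (k+1) ≤
        σ ^ 2 * ‖x (k+1) - vt k‖ ^ 2)
    (hls : ∀ k : ℕ, θ ≤ lam (k+1) * ‖x (k+1) - vt k‖ ^ (p - 1))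
    (hv : ∀ k : ℕ, v (k+1) = v k - (α (k+1) / γ (k+1)) • w (k+1))
    (hE : ∀ k : ℕ, E k = (1 / γ k) * (Φ (x k) - Φ xstar) + (1/2) * ‖v k - xstar‖ ^ 2) :
    ∃ C > (0:ℝ), ∀ k : ℕ, 1 ≤ k →
      Φ (x k) - Φ xstar ≤ C * (k:ℝ) ^ (-((3 * (p:ℝ) + 1) / 2)) ∧
      sInf ((fun i => ‖w i‖ ^ 2) '' {i : ℕ | 1 ≤ i ∧ i ≤ k}) ≤
        C * (k:ℝ) ^ (-(3 * (p:ℝ))) ∧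
      sInf (eps '' {i : ℕ | 1 ≤ i ∧ i ≤ k}) ≤ C * (k:ℝ) ^ (-((3 * (p:ℝ) + 3) / 2)) :=
  stmt_17_general d p hp Φ σ θ hσ hθ xstar hstar x v w vt γ eps lam α E hγ0 hγpos hlampos hepsnn hα
    hαeq hγ hvt hw herr hls hv hE
end

section
/- Let p ≥ 1 be an integer, λ > 0, θ > 0, σ ∈ (0, 1), and let w, x, ṽ ∈ ℝ^d satisfy ‖λw + x − ṽ‖ ≤ σ‖x − ṽ‖ and λ‖x − ṽ‖^{p−1} ≥ θ. Then λ^p‖w‖^{p−1} ≥ θ(1 − σ)^{p−1}; equivalently, λ‖w‖^{(p−1)/p} ≥ θ^{1/p}(1 − σ)^{(p−1)/p}. -/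
/-- if `‖λw + x − ṽ‖ ≤ σ‖x − ṽ‖` and `λ‖x − ṽ‖^{p−1} ≥ θ`, then
`λ^p‖w‖^{p−1} ≥ θ(1−σ)^{p−1}`, equivalently `λ‖w‖^{(p−1)/p} ≥ θ^{1/p}(1−σ)^{(p−1)/p}`. -/
theorem stmt_18 (d p : ℕ) (hd : 1 ≤ d) (hp : 1 ≤ p)
    (lam θ σ : ℝ) (hlam : 0 < lam) (hθ : 0 < θ) (hσ : σ ∈ Set.Ioo (0:ℝ) 1)
    (w x vt : EuclideanSpace ℝ (Fin d))
    (h1 : ‖lam • w + x - vt‖ ≤ σ * ‖x - vt‖)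
    (h2 : θ ≤ lam * ‖x - vt‖ ^ (p - 1)) :
    θ * (1 - σ) ^ (p - 1) ≤ lam ^ p * ‖w‖ ^ (p - 1) ∧
    θ ^ (1 / (p:ℝ)) * (1 - σ) ^ (((p:ℝ) - 1) / (p:ℝ)) ≤
      lam * ‖w‖ ^ (((p:ℝ) - 1) / (p:ℝ)) := by
  obtain ⟨hσ0, hσ1⟩ := hσ
  have h1σ : 0 < 1 - σ := by linarith
  have hkey : (1 - σ) * ‖x - vt‖ ≤ lam * ‖w‖ := by
    have h3 : ‖x - vt‖ - ‖lam • w + x - vt‖ ≤ ‖(x - vt) - (lam • w + x - vt)‖ :=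
      norm_sub_norm_le _ _
    have h4 : (x - vt) - (lam • w + x - vt) = -(lam • w) := by abel
    rw [h4, norm_neg, norm_smul, Real.norm_eq_abs, abs_of_pos hlam] at h3
    nlinarith [norm_nonneg (x - vt)]
  have hfirst : θ * (1 - σ) ^ (p - 1) ≤ lam ^ p * ‖w‖ ^ (p - 1) := by
    have hpow : ((1 - σ) * ‖x - vt‖) ^ (p - 1) ≤ (lam * ‖w‖) ^ (p - 1) :=
      pow_le_pow_left₀ (by positivity) hkey _
    rw [mul_pow, mul_pow] at hpow
    have hlp : lam ^ p = lam * lam ^ (p - 1) := by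
      rw [← pow_succ']
      congr 1
      omega
    rw [hlp]
    calc θ * (1 - σ) ^ (p - 1) ≤ (lam * ‖x - vt‖ ^ (p - 1)) * (1 - σ) ^ (p - 1) := by
          apply mul_le_mul_of_nonneg_right h2 (by positivity)
      _ = lam * ((1 - σ) ^ (p - 1) * ‖x - vt‖ ^ (p - 1)) := by ring
      _ ≤ lam * (lam ^ (p - 1) * ‖w‖ ^ (p - 1)) := by
          apply mul_le_mul_of_nonneg_left hpow hlam.le
      _ = lam * lam ^ (p - 1) * ‖w‖ ^ (p - 1) := by ring
  refine ⟨hfirst, ?_⟩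
  have hp0 : (0:ℝ) < p := by exact_mod_cast hp
  have hcast : ((p - 1 : ℕ) : ℝ) = (p:ℝ) - 1 := by
    have := Nat.cast_sub hp (R := ℝ)
    simpa using this
  have hrpow : (θ * (1 - σ) ^ (p - 1)) ^ (1/(p:ℝ)) ≤ (lam ^ p * ‖w‖ ^ (p - 1)) ^ (1/(p:ℝ)) :=
    Real.rpow_le_rpow (by positivity) hfirst (by positivity)
  have hL : (θ * (1 - σ) ^ (p - 1)) ^ (1/(p:ℝ)) =
      θ ^ (1 / (p:ℝ)) * (1 - σ) ^ (((p:ℝ) - 1) / (p:ℝ)) := by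
    rw [Real.mul_rpow hθ.le (by positivity), ← Real.rpow_natCast (1 - σ) (p - 1),
      ← Real.rpow_mul h1σ.le, hcast]
    ring_nf
  have hR : (lam ^ p * ‖w‖ ^ (p - 1)) ^ (1/(p:ℝ)) =
      lam * ‖w‖ ^ (((p:ℝ) - 1) / (p:ℝ)) := by
    rw [Real.mul_rpow (by positivity) (by positivity),
      ← Real.rpow_natCast lam p, ← Real.rpow_mul hlam.le,
      ← Real.rpow_natCast ‖w‖ (p - 1), ← Real.rpow_mul (norm_nonneg w), hcast,
      mul_one_div, div_self hp0.ne', Real.rpow_one]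
    ring_nf
  rw [hL, hR] at hrpow
  exact hrpow
end
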